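/- arXiv:1605.04178 — 7 statements merged into one kernel-verified Lean document; each statement's English description precedes it below -/
import Mathlib

section
/- Let n be a positive integer and δ a real number. Let P = {t ∈ (0, 2π) : cos(nt − δ) > 0} and N = {t ∈ (0, 2π) : cos(nt − δ) < 0}. Then ∫_P cos(nt − δ) dt = 2 and ∫_N cos(nt − δ) dt = −2. -/
open MeasureTheory Real

lemma abs_cos_per : Function.Periodic (fun x => |Real.cos x|) π := by
  intro x; simp [Real.cos_add_pi]

lemma abs_cos_int : ∀ a b : ℝ, IntervalIntegrable (fun x => |Real.cos x|) volume a b :=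
  fun a b => (Real.continuous_cos.abs).intervalIntegrable a b

lemma int_abs_cos_pi : ∫ x in (0:ℝ)..π, |Real.cos x| = 2 := by
  have hpi := Real.pi_pos
  have h0 : (0:ℝ) ≤ π/2 := by linarith
  have h1 : ∫ x in (0:ℝ)..(π/2), |Real.cos x| = 1 := by
    rw [intervalIntegral.integral_congr (g := Real.cos) ?_]
    · simp
    · intro x hx
      rw [Set.uIcc_of_le h0] at hx
      exact abs_of_nonneg (Real.cos_nonneg_of_mem_Icc ⟨by linarith [hx.1], hx.2⟩)
  have h2 : ∫ x in (π/2:ℝ)..π, |Real.cos x| = 1 := by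
    rw [intervalIntegral.integral_congr (g := fun x => -Real.cos x) ?_]
    · simp
    · intro x hx
      rw [Set.uIcc_of_le (by linarith)] at hx
      exact abs_of_nonpos (Real.cos_nonpos_of_pi_div_two_le_of_le hx.1 (by linarith [hx.2]))
  rw [← intervalIntegral.integral_add_adjacent_intervals (abs_cos_int 0 (π/2)) (abs_cos_int (π/2) π), h1, h2]
  norm_num

lemma intA (n : ℕ) (hn : 0 < n) (δ : ℝ) :
    ∫ t in (0:ℝ)..(2*π), Real.cos (n*t - δ) = 0 := by
  have hne : (n:ℝ) ≠ 0 := Nat.cast_ne_zero.mpr hn.ne'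
  have h := intervalIntegral.integral_comp_mul_sub (f := Real.cos) (a := 0) (b := 2*π) hne δ
  have h2 : ∫ x in ((n:ℝ)*0 - δ)..((n:ℝ)*(2*π) - δ), Real.cos x = 0 := by
    rw [integral_cos]
    have e : (n:ℝ)*(2*π) - δ = (-δ) + n*(2*π) := by ring
    rw [e, Real.sin_periodic.nat_mul n (-δ)]
    simp
  rw [h2] at h
  simpa using h

lemma intB (n : ℕ) (hn : 0 < n) (δ : ℝ) :
    ∫ t in (0:ℝ)..(2*π), |Real.cos (n*t - δ)| = 4 := by
  have hne : (n:ℝ) ≠ 0 := Nat.cast_ne_zero.mpr hn.ne'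
  have h := intervalIntegral.integral_comp_mul_sub (f := fun x => |Real.cos x|) (a := 0) (b := 2*π) hne δ
  have h2 : ∫ x in ((n:ℝ)*0 - δ)..((n:ℝ)*(2*π) - δ), |Real.cos x| = 4 * n := by
    have e : (n:ℝ)*(2*π) - δ = ((n:ℝ)*0 - δ) + ((2*n : ℤ) • π) := by
      rw [zsmul_eq_mul]; push_cast; ring
    rw [e, abs_cos_per.intervalIntegral_add_zsmul_eq (2*n) _ abs_cos_int,
      abs_cos_per.intervalIntegral_add_eq _ 0, zero_add, int_abs_cos_pi]
    rw [zsmul_eq_mul]; push_cast; ring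
  rw [h2] at h
  rw [h, smul_eq_mul]
  field_simp

theorem stmt_0 (n : ℕ) (hn : 0 < n) (δ : ℝ) :
    (∫ t in {t ∈ Set.Ioo (0:ℝ) (2*π) | Real.cos (n*t - δ) > 0}, Real.cos (n*t - δ)) = 2 ∧
    (∫ t in {t ∈ Set.Ioo (0:ℝ) (2*π) | Real.cos (n*t - δ) < 0}, Real.cos (n*t - δ)) = -2 := by
  have hpi := Real.pi_pos
  set f : ℝ → ℝ := fun t => Real.cos (n*t - δ) with hf
  have hfc : Continuous f := by fun_prop
  set s : Set ℝ := Set.Ioo (0:ℝ) (2*π) with hsdef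
  have hs : MeasurableSet s := measurableSet_Ioo
  have hIf : IntegrableOn f s :=
    (hfc.locallyIntegrable.integrableOn_isCompact (isCompact_Icc (a := (0:ℝ)) (b := 2*π))).mono_set Set.Ioo_subset_Icc_self
  have hIa : IntegrableOn (fun t => |f t|) s :=
    (hfc.abs.locallyIntegrable.integrableOn_isCompact (isCompact_Icc (a := (0:ℝ)) (b := 2*π))).mono_set Set.Ioo_subset_Icc_self
  have hA : ∫ t in s, f t = 0 := by
    rw [hsdef, ← MeasureTheory.integral_Ioc_eq_integral_Ioo,
      ← intervalIntegral.integral_of_le (by linarith)]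
    exact intA n hn δ
  have hB : ∫ t in s, |f t| = 4 := by
    rw [hsdef, ← MeasureTheory.integral_Ioc_eq_integral_Ioo,
      ← intervalIntegral.integral_of_le (by linarith)]
    exact intB n hn δ
  have hTm : MeasurableSet {t : ℝ | 0 < f t} :=
    measurableSet_lt measurable_const hfc.measurable
  have hTm' : MeasurableSet {t : ℝ | f t < 0} :=
    measurableSet_lt hfc.measurable measurable_const
  constructor
  · have e1 : {t ∈ s | f t > 0} = s ∩ {t : ℝ | 0 < f t} := rfl
    have e2 : ∫ t in s ∩ {t : ℝ | 0 < f t}, f t = ∫ t in s, max (f t) 0 := by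
      rw [← MeasureTheory.setIntegral_indicator hTm]
      refine MeasureTheory.setIntegral_congr_fun hs fun x _ => ?_
      by_cases h : 0 < f x
      · simp [Set.indicator_of_mem, h, max_eq_left h.le]
      · simp [Set.indicator_of_notMem, h, max_eq_right (not_lt.mp h)]
    have e3 : ∫ t in s, max (f t) 0 = 2 := by
      have : ∀ t, max (f t) 0 = (f t + |f t|)/2 := by
        intro t
        rcases le_total 0 (f t) with h | h
        · rw [max_eq_left h, abs_of_nonneg h]; ring
        · rw [max_eq_right h, abs_of_nonpos h]; ring
      simp_rw [this]
      rw [MeasureTheory.integral_div, MeasureTheory.integral_add hIf hIa, hA, hB]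
      norm_num
    rw [e1, e2, e3]
  · have e1 : {t ∈ s | f t < 0} = s ∩ {t : ℝ | f t < 0} := rfl
    have e2 : ∫ t in s ∩ {t : ℝ | f t < 0}, f t = ∫ t in s, min (f t) 0 := by
      rw [← MeasureTheory.setIntegral_indicator hTm']
      refine MeasureTheory.setIntegral_congr_fun hs fun x _ => ?_
      by_cases h : f x < 0
      · simp [Set.indicator_of_mem, h, min_eq_left h.le]
      · simp [Set.indicator_of_notMem, h, min_eq_right (not_lt.mp h)]
    have e3 : ∫ t in s, min (f t) 0 = -2 := by
      have : ∀ t, min (f t) 0 = (f t - |f t|)/2 := by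
        intro t
        rcases le_total 0 (f t) with h | h
        · rw [min_eq_right h, abs_of_nonneg h]; ring
        · rw [min_eq_left h, abs_of_nonpos h]; ring
      simp_rw [this]
      rw [MeasureTheory.integral_div, MeasureTheory.integral_sub hIf hIa, hA, hB]
      norm_num
    rw [e1, e2, e3]
end

section
/- Let g : ℝ → ℝ be continuous with finite limits g(±∞) at ±∞ satisfying g(−∞) < g(u) < g(∞) for all u. Suppose u is a 2π-periodic C² solution of u'' + n²u + g(u) = f(t) for a continuous 2π-periodic f, where n ≥ 1 is an integer. Set A = ∫_0^{2π} f(t) cos(nt) dt and B = ∫_0^{2π} f(t) sin(nt) dt. Then √(A² + B²) < 2(g(∞) − g(−∞)). -/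
/-! Multiplying the equation by `cos (n t - δ)` and integrating over a period kills the resonant
linear part `u'' + n² u`, so `A cos δ + B sin δ = ∫ g(u t) cos (n t - δ) dt`. Taking `δ` to be the
argument of `A + iB` turns the left side into `√(A² + B²)`. Since `|g - (g(∞) + g(-∞))/2|` is
strictly less than `(g(∞) - g(-∞))/2`, the right side is strictly less than
`(g(∞) - g(-∞))/2 · ∫ |cos (n t - δ)| dt = 2 (g(∞) - g(-∞))`. -/

open Real Function intervalIntegral

theorem Function.Periodic.intervalIntegral_comp_nat_mul_sub {E : Type*} [NormedAddCommGroup E]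
    [NormedSpace ℝ E] {h : ℝ → E} {T : ℝ} (hh : Periodic h T)
    (hint : ∀ a b, IntervalIntegrable h MeasureTheory.volume a b) {n : ℕ} (hn : n ≠ 0) (δ : ℝ) :
    ∫ t in 0..T, h (n * t - δ) = ∫ t in 0..T, h t := by
  have hn' : (n : ℝ) ≠ 0 := Nat.cast_ne_zero.mpr hn
  have hend : (n : ℝ) * T - δ = (n * 0 - δ) + (n : ℤ) • T := by rw [zsmul_eq_mul]; push_cast; ring
  rw [integral_comp_mul_sub h hn', hend, hh.intervalIntegral_add_zsmul_eq _ _ hint,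
    hh.intervalIntegral_add_eq _ 0, zero_add, natCast_zsmul, ← Nat.cast_smul_eq_nsmul ℝ, smul_smul,
    inv_mul_cancel₀ hn', one_smul]

theorem integral_cos_nat_mul_sub {n : ℕ} (hn : n ≠ 0) (δ : ℝ) :
    ∫ t in 0..2 * π, cos (n * t - δ) = 0 := by
  rw [cos_periodic.intervalIntegral_comp_nat_mul_sub
    (fun _ _ ↦ continuous_cos.intervalIntegrable _ _) hn, integral_cos]
  simp

theorem integral_abs_cos_zero_two_pi : ∫ x in 0..2 * π, |cos x| = 4 := by
  have hper : Periodic (fun x ↦ |cos x|) π := fun x ↦ by simp [cos_add_pi]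
  have htwo : 2 * π = 0 + (2 : ℤ) • π := by simp
  have hhalf : ∫ x in -(π / 2)..-(π / 2) + π, |cos x| = 2 := by
    rw [show -(π / 2) + π = π / 2 by ring, integral_congr (g := cos), integral_cos]
    · norm_num
    · intro x hx
      rw [Set.uIcc_of_le (by linarith [pi_pos])] at hx
      exact abs_of_nonneg (cos_nonneg_of_mem_Icc hx)
  rw [htwo, hper.intervalIntegral_add_zsmul_eq 2 0
    (fun _ _ ↦ continuous_cos.abs.intervalIntegrable _ _),
    hper.intervalIntegral_add_eq 0 (-(π / 2)), hhalf]
  norm_num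

theorem integral_abs_cos_nat_mul_sub {n : ℕ} (hn : n ≠ 0) (δ : ℝ) :
    ∫ t in 0..2 * π, |cos (n * t - δ)| = 4 := by
  have hper : Periodic (fun x ↦ |cos x|) (2 * π) := fun x ↦ by simp [cos_add_two_pi]
  rw [hper.intervalIntegral_comp_nat_mul_sub
    (fun _ _ ↦ continuous_cos.abs.intervalIntegrable _ _) hn, integral_abs_cos_zero_two_pi]

theorem integral_deriv_deriv_add_sq_mul_mul_cos_eq_zero {u : ℝ → ℝ} (hu : ContDiff ℝ 2 u)
    (hup : Periodic u (2 * π)) (n : ℕ) (δ : ℝ) :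
    ∫ t in 0..2 * π, (deriv (deriv u) t + (n : ℝ) ^ 2 * u t) * cos (n * t - δ) = 0 := by
  have hu1 : ContDiff ℝ 1 (deriv u) := hu.iterate_deriv' 1 1
  have hdu : Differentiable ℝ u := hu.differentiable (by norm_num)
  have hddu : Differentiable ℝ (deriv u) := hu1.differentiable one_ne_zero
  set F : ℝ → ℝ := fun t ↦ deriv u t * cos (n * t - δ) + n * u t * sin (n * t - δ)
  have hF : ∀ t, HasDerivAt F ((deriv (deriv u) t + (n : ℝ) ^ 2 * u t) * cos (n * t - δ)) t := by
    intro t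
    have hlin : HasDerivAt (fun t : ℝ ↦ (n : ℝ) * t - δ) n t := by
      simpa using ((hasDerivAt_id t).const_mul (n : ℝ)).sub_const δ
    exact (((hddu t).hasDerivAt.mul hlin.cos).add
      (((hdu t).hasDerivAt.const_mul (n : ℝ)).mul hlin.sin)).congr_deriv
      (by ring)
  have hdu_per : deriv u (2 * π) = deriv u 0 := by
    rw [← zero_add (2 * π), ← deriv_comp_add_const, hup.funext]
  have hu_per : u (2 * π) = u 0 := by simpa using hup 0
  rw [integral_eq_sub_of_hasDerivAt (fun t _ ↦ hF t) (Continuous.intervalIntegrable ?_ _ _)]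
  · simp [F, hdu_per, hu_per]
  · have := hu1.continuous_deriv le_rfl
    fun_prop

theorem exists_mul_cos_add_mul_sin_eq_sqrt (A B : ℝ) :
    ∃ δ : ℝ, A * cos δ + B * sin δ = √(A ^ 2 + B ^ 2) := by
  set z : ℂ := ⟨A, B⟩
  have hA : ‖z‖ * cos z.arg = A := Complex.norm_mul_cos_arg z
  have hB : ‖z‖ * sin z.arg = B := Complex.norm_mul_sin_arg z
  have hz : ‖z‖ = √(A ^ 2 + B ^ 2) := by
    rw [Complex.norm_def, Complex.normSq_mk]; ring_nf
  refine ⟨z.arg, ?_⟩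
  rw [← hz, ← hA, ← hB]
  linear_combination ‖z‖ * sin_sq_add_cos_sq z.arg

theorem integral_mul_cos_mul_sub {f : ℝ → ℝ} (hf : Continuous f) (a b ω δ : ℝ) :
    ∫ t in a..b, f t * cos (ω * t - δ) =
      cos δ * (∫ t in a..b, f t * cos (ω * t)) + sin δ * ∫ t in a..b, f t * sin (ω * t) := by
  rw [← integral_const_mul, ← integral_const_mul,
    ← integral_add (Continuous.intervalIntegrable (by fun_prop) _ _)
      (Continuous.intervalIntegrable (by fun_prop) _ _)]
  congr 1 with t
  rw [cos_sub]
  ring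

theorem integral_mul_lt_of_forall_mem_Ioo {v c : ℝ → ℝ} {a b lo hi : ℝ} (hab : a < b)
    (hv : Continuous v) (hc : Continuous c) (hbd : ∀ t, lo < v t ∧ v t < hi)
    (hc0 : ∫ t in a..b, |c t| ≠ 0) :
    ∫ t in a..b, v t * c t < ∫ t in a..b, ((hi + lo) / 2 * c t + (hi - lo) / 2 * |c t|) := by
  have hdev : ∀ t, |v t - (hi + lo) / 2| < (hi - lo) / 2 := fun t ↦
    abs_sub_lt_iff.mpr ⟨by linarith [hbd t], by linarith [hbd t]⟩
  set m := (hi + lo) / 2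
  set r := (hi - lo) / 2
  have hmul : ∀ t, v t * c t - m * c t ≤ |v t - m| * |c t| := fun t ↦ by
    rw [← abs_mul, ← sub_mul]; exact le_abs_self _
  have hle : ∀ t, v t * c t ≤ m * c t + r * |c t| := fun t ↦ by
    linarith [hmul t, mul_le_mul_of_nonneg_right (hdev t).le (abs_nonneg (c t))]
  have hlt : ∀ t, c t ≠ 0 → v t * c t < m * c t + r * |c t| := fun t ht ↦ by
    linarith [hmul t, mul_lt_mul_of_pos_right (hdev t) (abs_pos.mpr ht)]
  refine integral_lt_integral_of_continuousOn_of_le_of_exists_lt hab (by fun_prop) (by fun_prop)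
    (fun t _ ↦ hle t) ?_
  by_contra! hzero
  refine hc0 ((integral_congr (g := 0) fun t ht ↦ ?_).trans integral_zero)
  rw [Set.uIcc_of_le hab.le] at ht
  by_contra hct
  exact (hzero t ht).not_gt (hlt t (abs_ne_zero.mp hct))

theorem stmt_4_general (g : ℝ → ℝ) (hgc : Continuous g) (gm gp : ℝ)
    (hb : ∀ u : ℝ, gm < g u ∧ g u < gp)
    (n : ℕ) (hn : 1 ≤ n)
    (f : ℝ → ℝ) (hfc : Continuous f)
    (u : ℝ → ℝ) (hu : ContDiff ℝ 2 u) (hup : Function.Periodic u (2*π))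
    (heq : ∀ t : ℝ, deriv (deriv u) t + (n:ℝ)^2 * u t + g (u t) = f t)
    (A B : ℝ)
    (hA : A = ∫ t in (0:ℝ)..(2*π), f t * Real.cos (n*t))
    (hB : B = ∫ t in (0:ℝ)..(2*π), f t * Real.sin (n*t)) :
    Real.sqrt (A^2 + B^2) < 2 * (gp - gm) := by
  have hn0 : n ≠ 0 := Nat.one_le_iff_ne_zero.mp hn
  obtain ⟨δ, hδ⟩ := exists_mul_cos_add_mul_sin_eq_sqrt A B
  have hgu : Continuous fun t ↦ g (u t) := hgc.comp hu.continuous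
  have hf_eq_g : ∫ t in 0..2 * π, f t * cos (n * t - δ) =
      ∫ t in 0..2 * π, g (u t) * cos (n * t - δ) := by
    have hu2 : Continuous (deriv (deriv u)) := (hu.iterate_deriv' 0 2).continuous
    have hsplit : (fun t ↦ f t * cos (n * t - δ)) = fun t ↦
        (deriv (deriv u) t + (n : ℝ) ^ 2 * u t) * cos (n * t - δ) + g (u t) * cos (n * t - δ) := by
      funext t; rw [← heq]; ring
    rw [hsplit, integral_add (Continuous.intervalIntegrable (by fun_prop) _ _)
      (Continuous.intervalIntegrable (by fun_prop) _ _),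
      integral_deriv_deriv_add_sq_mul_mul_cos_eq_zero hu hup, zero_add]
  calc √(A ^ 2 + B ^ 2) = A * cos δ + B * sin δ := hδ.symm
    _ = ∫ t in 0..2 * π, f t * cos (n * t - δ) := by
      rw [integral_mul_cos_mul_sub hfc, hA, hB]; ring
    _ = ∫ t in 0..2 * π, g (u t) * cos (n * t - δ) := hf_eq_g
    _ < ∫ t in 0..2 * π, ((gp + gm) / 2 * cos (n * t - δ) + (gp - gm) / 2 * |cos (n * t - δ)|) :=
      integral_mul_lt_of_forall_mem_Ioo (by positivity) hgu (by fun_prop) (fun t ↦ hb (u t))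
        (by rw [integral_abs_cos_nat_mul_sub hn0]; norm_num)
    _ = 2 * (gp - gm) := by
      rw [integral_add (Continuous.intervalIntegrable (by fun_prop) _ _)
        (Continuous.intervalIntegrable (by fun_prop) _ _), integral_const_mul, integral_const_mul,
        integral_cos_nat_mul_sub hn0, integral_abs_cos_nat_mul_sub hn0]
      ring

theorem stmt_4 (g : ℝ → ℝ) (hgc : Continuous g) (gm gp : ℝ)
    (hgm : Filter.Tendsto g Filter.atBot (nhds gm))
    (hgp : Filter.Tendsto g Filter.atTop (nhds gp))
    (hb : ∀ u : ℝ, gm < g u ∧ g u < gp)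
    (n : ℕ) (hn : 1 ≤ n)
    (f : ℝ → ℝ) (hfc : Continuous f) (hfp : Function.Periodic f (2*π))
    (u : ℝ → ℝ) (hu : ContDiff ℝ 2 u) (hup : Function.Periodic u (2*π))
    (heq : ∀ t : ℝ, deriv (deriv u) t + (n:ℝ)^2 * u t + g (u t) = f t)
    (A B : ℝ)
    (hA : A = ∫ t in (0:ℝ)..(2*π), f t * Real.cos (n*t))
    (hB : B = ∫ t in (0:ℝ)..(2*π), f t * Real.sin (n*t)) :
    Real.sqrt (A^2 + B^2) < 2 * (gp - gm) :=
  stmt_4_general g hgc gm gp hb n hn f hfc u hu hup heq A B hA hB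
end

section
/- Let m ∈ ℕ, and suppose ξ_i = η_i + (A_i − I_i) for i = 1,…,m, where the A_i, I_i are real numbers with (A_i − I_i)² ≤ h for all i, and suppose Σ_i η_i(A_i − I_i) ≤ −ε·√(Σ_i η_i²) whenever √(Σ_i η_i²) ≥ R, for some ε > 0, h ≥ 0, R ≥ 0. Then there exists N > 0 such that √(Σ_i η_i²) ≤ N implies √(Σ_i ξ_i²) ≤ N. -/
theorem stmt_6 (m : ℕ) (A : Fin m → ℝ) (I : (Fin m → ℝ) → Fin m → ℝ)
    (ξ : (Fin m → ℝ) → Fin m → ℝ)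
    (hξ : ∀ η i, ξ η i = η i + (A i - I η i))
    (h ε R : ℝ) (hh : 0 ≤ h) (hε : 0 < ε) (hR : 0 ≤ R)
    (hbound : ∀ η i, (A i - I η i)^2 ≤ h)
    (hdecay : ∀ η : Fin m → ℝ, R ≤ Real.sqrt (∑ i, η i ^ 2) →
      (∑ i, η i * (A i - I η i)) ≤ -ε * Real.sqrt (∑ i, η i ^ 2)) :
    ∃ N > 0, ∀ η : Fin m → ℝ,
      Real.sqrt (∑ i, η i ^ 2) ≤ N → Real.sqrt (∑ i, ξ η i ^ 2) ≤ N := by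
  set M : ℝ := max R (m * h / (2 * ε)) with hM
  have hM0 : 0 ≤ M := le_trans hR (le_max_left _ _)
  have hmh : 0 ≤ (m : ℝ) * h := mul_nonneg (Nat.cast_nonneg m) hh
  have hsq : Real.sqrt ((m : ℝ) * h) ^ 2 = (m : ℝ) * h := Real.sq_sqrt hmh
  have hsq0 : 0 ≤ Real.sqrt ((m : ℝ) * h) := Real.sqrt_nonneg _
  refine ⟨M + Real.sqrt ((m : ℝ) * h) + 1, by positivity, fun η hη => ?_⟩
  set N : ℝ := M + Real.sqrt ((m : ℝ) * h) + 1 with hN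
  have hN0 : 0 ≤ N := by positivity
  set S : ℝ := Real.sqrt (∑ i, η i ^ 2) with hS
  have hS0 : 0 ≤ S := Real.sqrt_nonneg _
  have hSsq : S ^ 2 = ∑ i, η i ^ 2 := Real.sq_sqrt (by positivity)
  -- sum of d squares bound
  have hd : (∑ i, (A i - I η i) ^ 2) ≤ (m : ℝ) * h := by
    calc (∑ i, (A i - I η i) ^ 2) ≤ ∑ _i : Fin m, h :=
          Finset.sum_le_sum fun i _ => hbound η i
      _ = (m : ℝ) * h := by simp [mul_comm]
  -- expansion
  have hexp : (∑ i, ξ η i ^ 2)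
      = S ^ 2 + 2 * (∑ i, η i * (A i - I η i)) + ∑ i, (A i - I η i) ^ 2 := by
    have he : ∀ i, ξ η i ^ 2
        = η i ^ 2 + 2 * (η i * (A i - I η i)) + (A i - I η i) ^ 2 := fun i => by
      rw [hξ]; ring
    simp_rw [he, Finset.sum_add_distrib, ← Finset.mul_sum, hSsq]
  suffices hs : (∑ i, ξ η i ^ 2) ≤ N ^ 2 by
    calc Real.sqrt (∑ i, ξ η i ^ 2) ≤ Real.sqrt (N ^ 2) := Real.sqrt_le_sqrt hs
      _ = N := Real.sqrt_sq hN0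
  by_cases hc : M ≤ S
  · have hRS : R ≤ S := le_trans (le_max_left _ _) hc
    have hdec := hdecay η hRS
    have h2 : (m : ℝ) * h / (2 * ε) ≤ S := le_trans (le_max_right _ _) hc
    have h3 : (m : ℝ) * h ≤ 2 * ε * S := by
      rw [div_le_iff₀ (by positivity)] at h2; linarith [h2]
    nlinarith [hS0, hε, hη]
  · push_neg at hc
    have hcs := Finset.sum_mul_sq_le_sq_mul_sq Finset.univ η (fun i => A i - I η i)
    have hub : (∑ i, η i * (A i - I η i)) ^ 2 ≤ S ^ 2 * ((m : ℝ) * h) := by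
      refine le_trans hcs ?_
      rw [hSsq]
      exact mul_le_mul_of_nonneg_left hd (by positivity)
    have hub2 : (∑ i, η i * (A i - I η i)) ≤ S * Real.sqrt ((m : ℝ) * h) := by
      nlinarith [hub, mul_nonneg hS0 hsq0]
    nlinarith [hub2, hd, hsq0, hS0, hc, hM0]
end

section
/- Let a, b ∈ ℝ and suppose ξ = a − I₁, η = b − I₂ with aI₁ + bI₂ ≥ μ√(a² + b²) whenever a² + b² ≥ R², for some μ > 0, and |I₁|, |I₂| ≤ h. Then there exists N > 0 such that a² + b² ≤ N² implies ξ² + η² ≤ N². -/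
set_option maxHeartbeats 1000000 in
theorem stmt_7 (I₁ I₂ : ℝ × ℝ → ℝ) (ξ η : ℝ × ℝ → ℝ)
    (hξ : ∀ p : ℝ × ℝ, ξ p = p.1 - I₁ p)
    (hη : ∀ p : ℝ × ℝ, η p = p.2 - I₂ p)
    (μ R h : ℝ) (hμ : 0 < μ) (hh : 0 ≤ h)
    (hI₁ : ∀ p, |I₁ p| ≤ h) (hI₂ : ∀ p, |I₂ p| ≤ h)
    (hdecay : ∀ p : ℝ × ℝ, R^2 ≤ p.1^2 + p.2^2 →
      μ * Real.sqrt (p.1^2 + p.2^2) ≤ p.1 * I₁ p + p.2 * I₂ p) :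
    ∃ N > 0, ∀ p : ℝ × ℝ, p.1^2 + p.2^2 ≤ N^2 → ξ p ^2 + η p ^2 ≤ N^2 := by
  set T : ℝ := max |R| (h^2 / μ) with hT
  have hT0 : 0 ≤ T := le_trans (abs_nonneg R) (le_max_left _ _)
  refine ⟨max (T + 2*h) 1, lt_of_lt_of_le one_pos (le_max_right _ _), ?_⟩
  intro p hp
  set N : ℝ := max (T + 2*h) 1 with hN
  have hN0 : 0 < N := lt_of_lt_of_le one_pos (le_max_right _ _)
  set s : ℝ := Real.sqrt (p.1^2 + p.2^2) with hs
  have hs0 : 0 ≤ s := Real.sqrt_nonneg _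
  have hsdef : s = Real.sqrt (p.1^2 + p.2^2) := hs
  have hs2 : s^2 = p.1^2 + p.2^2 := Real.sq_sqrt (by positivity)
  have hTdef : T = max |R| (h^2/μ) := hT
  have hNdef : N = max (T + 2*h) 1 := hN
  clear_value T N s
  have h1 := hI₁ p
  have h2 := hI₂ p
  have ha1 : |I₁ p| ^ 2 = I₁ p ^ 2 := sq_abs _
  have ha2 : |I₂ p| ^ 2 = I₂ p ^ 2 := sq_abs _
  rw [hξ, hη]
  rcases le_or_gt T s with hcase | hcase
  · -- large region
    have hR : R^2 ≤ p.1^2 + p.2^2 := by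
      have : |R| ≤ s := le_trans (hTdef ▸ le_max_left _ _) hcase
      have := mul_self_le_mul_self (abs_nonneg R) this
      nlinarith [sq_abs R]
    have hd := hdecay p hR
    rw [← hsdef] at hd
    have hμs : h^2 ≤ μ * s := by
      have : h^2 / μ ≤ s := le_trans (hTdef ▸ le_max_right _ _) hcase
      calc h^2 = μ * (h^2 / μ) := by field_simp
        _ ≤ μ * s := by nlinarith
    have : (p.1 - I₁ p)^2 + (p.2 - I₂ p)^2 ≤ p.1^2 + p.2^2 := by
      nlinarith [abs_nonneg (I₁ p), abs_nonneg (I₂ p)]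
    linarith
  · -- small region
    have hab : |p.1| ≤ s ∧ |p.2| ≤ s := by
      constructor <;> [skip; skip] <;>
        · rw [← Real.sqrt_sq_eq_abs, hsdef]
          exact Real.sqrt_le_sqrt (by nlinarith)
    have hTN : T + 2*h ≤ N := hNdef ▸ le_max_left _ _
    have e1 : (p.1 - I₁ p)^2 ≤ (|p.1| + h)^2 := by
      have l1 := abs_le.mp h1
      apply sq_le_sq' <;> [linarith [neg_abs_le p.1]; linarith [le_abs_self p.1]]
    have e2 : (p.2 - I₂ p)^2 ≤ (|p.2| + h)^2 := by
      have l2 := abs_le.mp h2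
      apply sq_le_sq' <;> [linarith [neg_abs_le p.2]; linarith [le_abs_self p.2]]
    have key : (p.1 - I₁ p)^2 + (p.2 - I₂ p)^2 ≤ (s + 2*h)^2 := by
      clear hdecay hξ hη hI₁ hI₂ hp hcase hsdef hs hT hN hTdef hNdef h1 h2 ha1 ha2
      nlinarith [sq_abs p.1, sq_abs p.2, mul_le_mul_of_nonneg_left hab.1 hh,
        mul_le_mul_of_nonneg_left hab.2 hh, sq_nonneg h]
    have hsN : s + 2*h ≤ N := le_trans (by linarith) hTN
    have : (s + 2*h)^2 ≤ N^2 := by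
      have h0 : 0 ≤ s + 2*h := by linarith
      exact pow_le_pow_left₀ h0 hsN 2
    linarith
end

section
/- Let g : ℝ → ℝ be bounded and measurable, with g(u) > D for u > d and g(u) < C for u < c, where C < D. Let n ≥ 1 be an integer, δ ∈ ℝ. Suppose U : ℝ → ℝ is measurable with ‖U‖_∞ ≤ M. Then lim inf as s → +∞ of ∫_0^{2π} g(s·cos(nt − δ) + U(t)) cos(nt − δ) dt ≥ 2(D − C). -/
open Real

open intervalIntegral

lemma abs_cos_int_s10 : ∫ t in (0:ℝ)..(2*π), |Real.cos t| = 4 := by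
  have hpi := Real.pi_pos
  have h1 : ∫ t in (0:ℝ)..(π/2), |Real.cos t| = 1 := by
    rw [intervalIntegral.integral_congr (g := Real.cos)]
    · rw [integral_cos]; simp
    · intro x hx
      rw [Set.uIcc_of_le (by linarith)] at hx
      exact abs_of_nonneg (Real.cos_nonneg_of_mem_Icc ⟨by linarith [hx.1], by linarith [hx.2]⟩)
  have h2 : ∫ t in (π/2)..(3*π/2), |Real.cos t| = 2 := by
    rw [intervalIntegral.integral_congr (g := fun x => -Real.cos x)]
    · rw [intervalIntegral.integral_neg, integral_cos]
      have h32 : (3*π/2 : ℝ) = π + π/2 := by ring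
      rw [h32, Real.sin_pi_div_two]
      have : Real.sin (π + π/2) = -1 := by
        rw [Real.sin_add]; simp
      rw [this]; ring
    · intro x hx
      rw [Set.uIcc_of_le (by linarith)] at hx
      exact abs_of_nonpos (Real.cos_nonpos_of_pi_div_two_le_of_le hx.1 (by linarith [hx.2]))
  have h3 : ∫ t in (3*π/2)..(2*π), |Real.cos t| = 1 := by
    rw [intervalIntegral.integral_congr (g := Real.cos)]
    · rw [integral_cos]
      have h32 : (3*π/2 : ℝ) = π + π/2 := by ring
      have : Real.sin (3*π/2) = -1 := by rw [h32, Real.sin_add]; simp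
      rw [Real.sin_two_pi, this]; ring
    · intro x hx
      rw [Set.uIcc_of_le (by linarith)] at hx
      have : Real.cos (x - 2*π) = Real.cos x := Real.cos_sub_two_pi x
      have hxmem : x - 2*π ∈ Set.Icc (-(π/2)) (π/2) :=
        ⟨by linarith [hx.1], by linarith [hx.2]⟩
      have hc := Real.cos_nonneg_of_mem_Icc hxmem
      rw [this] at hc
      exact abs_of_nonneg hc
  have hi : ∀ a b : ℝ, IntervalIntegrable (fun t => |Real.cos t|) MeasureTheory.volume a b :=
    fun a b => (Real.continuous_cos.abs).intervalIntegrable a b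
  rw [← intervalIntegral.integral_add_adjacent_intervals (hi 0 (π/2)) (hi (π/2) (2*π)),
    ← intervalIntegral.integral_add_adjacent_intervals (hi (π/2) (3*π/2)) (hi (3*π/2) (2*π)),
    h1, h2, h3]
  norm_num

lemma abs_cos_int_n (n : ℕ) (hn : 1 ≤ n) (δ : ℝ) :
    ∫ t in (0:ℝ)..(2*π), |Real.cos (n*t - δ)| = 4 := by
  have hn0 : (n:ℝ) ≠ 0 := Nat.cast_ne_zero.mpr (by omega)
  have hi : ∀ a b : ℝ, IntervalIntegrable (fun t => |Real.cos t|) MeasureTheory.volume a b :=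
    fun a b => (Real.continuous_cos.abs).intervalIntegrable a b
  have hper : Function.Periodic (fun t => |Real.cos t|) (2*π) := fun x => by
    simp [Real.cos_add_two_pi]
  rw [intervalIntegral.integral_comp_mul_sub (fun t => |Real.cos t|) hn0 δ]
  have he : (n:ℝ) * (2*π) - δ = -δ + (n:ℤ) • (2*π) := by simp [zsmul_eq_mul]; push_cast; ring
  have he2 : (n:ℝ) * 0 - δ = -δ := by ring
  rw [he, he2, hper.intervalIntegral_add_zsmul_eq (n:ℤ) (-δ) hi,
    hper.intervalIntegral_add_eq (-δ) 0, zero_add, abs_cos_int_s10]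
  simp
  field_simp

lemma cos_int_n (n : ℕ) (hn : 1 ≤ n) (δ : ℝ) :
    ∫ t in (0:ℝ)..(2*π), Real.cos (n*t - δ) = 0 := by
  have hn0 : (n:ℝ) ≠ 0 := Nat.cast_ne_zero.mpr (by omega)
  have hi : ∀ a b : ℝ, IntervalIntegrable Real.cos MeasureTheory.volume a b :=
    fun a b => Real.continuous_cos.intervalIntegrable a b
  rw [intervalIntegral.integral_comp_mul_sub Real.cos hn0 δ]
  have he : (n:ℝ) * (2*π) - δ = -δ + (n:ℤ) • (2*π) := by simp [zsmul_eq_mul]; push_cast; ring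
  have he2 : (n:ℝ) * 0 - δ = -δ := by ring
  rw [he, he2, Real.cos_periodic.intervalIntegral_add_zsmul_eq (n:ℤ) (-δ) hi,
    Real.cos_periodic.intervalIntegral_add_eq (-δ) 0, zero_add, integral_cos]
  simp

set_option maxHeartbeats 1000000 in
theorem stmt_10 (g : ℝ → ℝ) (hgm : Measurable g) (Kb : ℝ) (hKb : ∀ u, |g u| ≤ Kb)
    (C D d c : ℝ) (hCD : C < D)
    (hup : ∀ u : ℝ, d < u → D < g u)
    (hdown : ∀ u : ℝ, u < c → g u < C)
    (n : ℕ) (hn : 1 ≤ n) (δ : ℝ) (M : ℝ) (hM : 0 ≤ M) :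
    ∀ ε > 0, ∃ s₀ : ℝ, ∀ s : ℝ, s₀ ≤ s → ∀ U : ℝ → ℝ, Measurable U →
      (∀ t, |U t| ≤ M) →
      2 * (D - C) - ε <
        ∫ t in (0:ℝ)..(2*π), g (s * Real.cos (n*t - δ) + U t) * Real.cos (n*t - δ) := by
  intro ε hε
  have hpi := Real.pi_pos
  have hKb0 : 0 ≤ Kb := le_trans (abs_nonneg _) (hKb 0)
  set L : ℝ := Kb + |D| + |C| with hLdef
  have hL0 : 0 ≤ L := by positivity
  set η : ℝ := ε / (2*π*(L+1)) with hηdef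
  have hη : 0 < η := by positivity
  refine ⟨max (max ((d+M)/η) ((M-c)/η)) 0 + 1, ?_⟩
  intro s hs U hU hUM
  have hs0 : 0 < s := by
    have := le_max_right (max ((d+M)/η) ((M-c)/η)) (0:ℝ)
    linarith
  have hsd : d + M < s * η := by
    have h1 : (d+M)/η < s := by
      have := le_max_left ((d+M)/η) ((M-c)/η)
      have := le_max_left (max ((d+M)/η) ((M-c)/η)) (0:ℝ)
      linarith
    calc d + M = ((d+M)/η) * η := by field_simp
    _ < s * η := by exact mul_lt_mul_of_pos_right h1 hη
  have hsc : M - c < s * η := by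
    have h1 : (M-c)/η < s := by
      have := le_max_right ((d+M)/η) ((M-c)/η)
      have := le_max_left (max ((d+M)/η) ((M-c)/η)) (0:ℝ)
      linarith
    calc M - c = ((M-c)/η) * η := by field_simp
    _ < s * η := by exact mul_lt_mul_of_pos_right h1 hη
  set φ : ℝ → ℝ := fun t => Real.cos (n*t - δ) with hφdef
  have hφcont : Continuous φ := by
    exact Real.continuous_cos.comp (by continuity)
  clear_value φ η L
  -- pointwise lower bound
  have key : ∀ t, (D-C)/2 * |φ t| + (D+C)/2 * (φ t) - L*η
      ≤ g (s * φ t + U t) * φ t := by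
    intro t
    have hUt := abs_le.1 (hUM t)
    rcases le_or_gt (φ t) η with hle | hgt
    · rcases le_or_gt (-η) (φ t) with hge | hlt
      · -- middle case
        have hxη : |φ t| ≤ η := abs_le.2 ⟨hge, hle⟩
        have hgx : -(Kb*η) ≤ g (s * φ t + U t) * φ t := by
          have h1 : |g (s * φ t + U t) * φ t| ≤ Kb * η := by
            rw [abs_mul]
            exact mul_le_mul (hKb _) hxη (abs_nonneg _) hKb0
          linarith [neg_abs_le (g (s * φ t + U t) * φ t)]
        have hA : (D-C)/2 * |φ t| ≤ (|D|+|C|)/2 * η := by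
          have h1 : (D-C)/2 ≤ (|D|+|C|)/2 := by
            have := abs_sub D C
            have := le_abs_self (D - C)
            linarith
          exact mul_le_mul h1 hxη (abs_nonneg _) (by positivity)
        have hB : (D+C)/2 * (φ t) ≤ (|D|+|C|)/2 * η := by
          calc (D+C)/2 * (φ t) ≤ |(D+C)/2 * (φ t)| := le_abs_self _
          _ = |(D+C)/2| * |φ t| := abs_mul _ _
          _ ≤ (|D|+|C|)/2 * η := by
              apply mul_le_mul _ hxη (abs_nonneg _) (by positivity)
              rw [abs_div]
              have := abs_abs (D+C)
              have := abs_add_le D C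
              simp only [Nat.abs_ofNat]
              linarith [abs_nonneg (D+C), abs_add_le D C]
        have : L*η = Kb*η + (|D|+|C|)/2*η + (|D|+|C|)/2*η := by rw [hLdef]; ring
        linarith
      · -- φ t < -η : g < C
        have harg : s * φ t + U t < c := by
          have h1 : s * φ t ≤ s * (-η) := mul_le_mul_of_nonneg_left (le_of_lt hlt) hs0.le
          have h2 : s * (-η) = -(s * η) := by ring
          linarith
        have hg := hdown _ harg
        have habs : |φ t| = -(φ t) := abs_of_neg (by linarith)
        have hprod : C * φ t ≤ g (s * φ t + U t) * φ t :=
          mul_le_mul_of_nonpos_right hg.le (by linarith)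
        have hLη : 0 ≤ L * η := by positivity
        have hr : (D-C)/2 * (-(φ t)) + (D+C)/2 * (φ t) = C * φ t := by ring
        rw [habs]; linarith
    · -- η < φ t : g > D
      have harg : d < s * φ t + U t := by
        have h1 : s * η ≤ s * φ t := mul_le_mul_of_nonneg_left (le_of_lt hgt) hs0.le
        linarith
      have hg := hup _ harg
      have habs : |φ t| = φ t := abs_of_pos (by linarith)
      have hDφ : D * φ t ≤ g (s * φ t + U t) * φ t :=
        mul_le_mul_of_nonneg_right hg.le (by linarith)
      have hLη : 0 ≤ L * η := by positivity
      have hr : (D-C)/2 * (φ t) + (D+C)/2 * (φ t) = D * φ t := by ring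
      rw [habs]; linarith
  -- integrability
  have hmφ : Measurable φ := hφcont.measurable
  have hmf : Measurable (fun t => g (s * φ t + U t) * φ t) :=
    (hgm.comp ((measurable_const.mul hmφ).add hU)).mul hmφ
  have hif : IntervalIntegrable (fun t => g (s * φ t + U t) * φ t)
      MeasureTheory.volume 0 (2*π) := by
    rw [intervalIntegrable_iff]
    apply MeasureTheory.Measure.integrableOn_of_bounded (M := Kb)
      (measure_Ioc_lt_top).ne hmf.aestronglyMeasurable
    · filter_upwards with t
      rw [Real.norm_eq_abs, abs_mul]
      have hφ1 : |φ t| ≤ 1 := by rw [hφdef]; exact Real.abs_cos_le_one _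
      calc |g (s * φ t + U t)| * |φ t| ≤ Kb * 1 :=
            mul_le_mul (hKb _) hφ1 (abs_nonneg _) hKb0
      _ = Kb := mul_one Kb
  have hig : IntervalIntegrable
      (fun t => (D-C)/2 * |φ t| + (D+C)/2 * (φ t) - L*η)
      MeasureTheory.volume 0 (2*π) := by
    apply Continuous.intervalIntegrable
    continuity
  -- integral of lower bound
  have hlow : ∫ t in (0:ℝ)..(2*π), ((D-C)/2 * |φ t| + (D+C)/2 * (φ t) - L*η)
      = 2*(D-C) - 2*π*L*η := by
    have i1 : IntervalIntegrable (fun t => (D-C)/2 * |φ t|) MeasureTheory.volume 0 (2*π) := by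
      apply Continuous.intervalIntegrable; continuity
    have i2 : IntervalIntegrable (fun t => (D+C)/2 * (φ t)) MeasureTheory.volume 0 (2*π) := by
      apply Continuous.intervalIntegrable; continuity
    rw [intervalIntegral.integral_sub (i1.add i2) (intervalIntegrable_const),
      intervalIntegral.integral_add i1 i2,
      intervalIntegral.integral_const_mul, intervalIntegral.integral_const_mul,
      intervalIntegral.integral_const]
    rw [hφdef]
    simp only []
    rw [abs_cos_int_n n hn δ, cos_int_n n hn δ]
    simp only [smul_eq_mul, sub_zero]
    ring
  have hmono := intervalIntegral.integral_mono_on (by linarith : (0:ℝ) ≤ 2*π) hig hif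
    (fun t _ => key t)
  rw [hlow] at hmono
  have hfin : 2*π*L*η < ε := by
    have h1 : 2*π*(L+1)*η = ε := by
      rw [hηdef]; field_simp
    nlinarith
  simp only [hφdef] at hmono
  linarith
end

section
/- Let g : ℝ → ℝ be continuous and bounded with u·g(u) > 0 for all u ≠ 0, lim inf_{u→∞} g(u) > 0 and lim sup_{u→−∞} g(u) < 0. Let n ≥ 1 be an integer and M > 0. Then there exist μ > 0 and R > 0 such that for all (a, b) with a² + b² ≥ R² and all measurable U with ‖U‖_∞ ≤ M: ∫_0^{2π} g(a cos(nt) + b sin(nt) + U(t)) (a cos(nt) + b sin(nt)) dt ≥ μ·√(a² + b²). -/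
/-! With `φ t = a cos nt + b sin nt` and `A = √(a² + b²)` one has `|φ| ≤ A` and
`∫₀^{2π} φ² = πA²`, hence `∫₀^{2π} |φ| ≥ πA`. The sign conditions at `±∞` give `c > 0` and `T`
with `u g(u) ≥ c|u|` for `|u| ≥ T`; since `|U| ≤ M`, this yields the pointwise bound
`g(φ + U) φ ≥ c|φ| - (c + K)(M + T)` with `K` a bound for `|g|`. Integrating,
`∫ g(φ + U) φ ≥ cπA - 2π(c + K)(M + T)`, which is at least `cπA/2` once `A` is large. -/

open Real Filter

lemma integral_cos_nat_mul {m : ℕ} (hm : m ≠ 0) : ∫ t in (0:ℝ)..2 * π, cos (m * t) = 0 := by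
  rw [intervalIntegral.integral_comp_mul_left (fun x => cos x) (Nat.cast_ne_zero.2 hm),
    integral_cos, sin_periodic.nat_mul_eq]
  simp

lemma integral_sin_nat_mul {m : ℕ} (hm : m ≠ 0) : ∫ t in (0:ℝ)..2 * π, sin (m * t) = 0 := by
  rw [intervalIntegral.integral_comp_mul_left (fun x => sin x) (Nat.cast_ne_zero.2 hm),
    integral_sin, cos_nat_mul_two_pi]
  simp

lemma integral_sq_mul_cos_add_mul_sin {n : ℕ} (hn : n ≠ 0) (a b : ℝ) :
    ∫ t in (0:ℝ)..2 * π, (a * cos (n * t) + b * sin (n * t)) ^ 2 = π * (a ^ 2 + b ^ 2) := by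
  have h2n : 2 * n ≠ 0 := by omega
  have hsq : ∀ t : ℝ, (a * cos (n * t) + b * sin (n * t)) ^ 2 = (a ^ 2 + b ^ 2) / 2
      + ((a ^ 2 - b ^ 2) / 2 * cos ((2 * n : ℕ) * t) + a * b * sin ((2 * n : ℕ) * t)) := by
    intro t
    push_cast
    rw [mul_assoc, cos_two_mul, sin_two_mul]
    linear_combination b ^ 2 * sin_sq_add_cos_sq (n * t)
  simp_rw [hsq]
  rw [intervalIntegral.integral_add, intervalIntegral.integral_add,
    intervalIntegral.integral_const_mul, intervalIntegral.integral_const_mul,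
    integral_cos_nat_mul h2n, integral_sin_nat_mul h2n]
  · rw [intervalIntegral.integral_const, smul_eq_mul]; ring
  all_goals exact (by fun_prop : Continuous _).intervalIntegrable _ _

lemma abs_mul_cos_add_mul_sin_le (a b θ : ℝ) : |a * cos θ + b * sin θ| ≤ √(a ^ 2 + b ^ 2) := by
  rw [← sqrt_sq_eq_abs]
  gcongr
  nlinarith [sin_sq_add_cos_sq θ, sq_nonneg (a * sin θ - b * cos θ)]

lemma integral_sq_le_mul_integral_abs {f : ℝ → ℝ} (hf : Continuous f) {A a b : ℝ} (hab : a ≤ b)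
    (hfA : ∀ t, |f t| ≤ A) : ∫ t in a..b, f t ^ 2 ≤ A * ∫ t in a..b, |f t| := by
  rw [← intervalIntegral.integral_const_mul]
  refine intervalIntegral.integral_mono_on hab ((hf.pow 2).intervalIntegrable _ _)
    ((continuous_const.mul hf.abs).intervalIntegrable _ _) fun t _ => ?_
  rw [← sq_abs, sq]
  exact mul_le_mul_of_nonneg_right (hfA t) (abs_nonneg _)

lemma mul_sqrt_le_integral_abs_mul_cos_add_mul_sin {n : ℕ} (hn : n ≠ 0) (a b : ℝ) :
    π * √(a ^ 2 + b ^ 2) ≤ ∫ t in (0:ℝ)..2 * π, |a * cos (n * t) + b * sin (n * t)| := by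
  rcases (sqrt_nonneg (a ^ 2 + b ^ 2)).eq_or_lt with hA | hA
  · rw [← hA, mul_zero]
    exact intervalIntegral.integral_nonneg (by positivity) fun t _ => abs_nonneg _
  refine le_of_mul_le_mul_left ?_ hA
  calc √(a ^ 2 + b ^ 2) * (π * √(a ^ 2 + b ^ 2)) = π * (a ^ 2 + b ^ 2) := by
        rw [mul_left_comm, ← sq, sq_sqrt (by positivity)]
    _ = ∫ t in (0:ℝ)..2 * π, (a * cos (n * t) + b * sin (n * t)) ^ 2 :=
        (integral_sq_mul_cos_add_mul_sin hn a b).symm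
    _ ≤ √(a ^ 2 + b ^ 2) * ∫ t in (0:ℝ)..2 * π, |a * cos (n * t) + b * sin (n * t)| :=
        integral_sq_le_mul_integral_abs (by fun_prop) (by positivity) fun t =>
          abs_mul_cos_add_mul_sin_le a b _

lemma exists_pos_mul_abs_le_mul_of_liminf_pos_of_limsup_neg {g : ℝ → ℝ}
    (hbot : IsBoundedUnder (· ≥ ·) atTop g) (htop : IsBoundedUnder (· ≤ ·) atBot g)
    (hinf : 0 < liminf g atTop) (hsup : limsup g atBot < 0) :
    ∃ c > 0, ∃ T ≥ 0, ∀ u, T ≤ |u| → c * |u| ≤ u * g u := by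
  set c := min (liminf g atTop) (-limsup g atBot) / 2
  have hc : 0 < c := half_pos (lt_min hinf (neg_pos.2 hsup))
  obtain ⟨T₁, hT₁⟩ := eventually_atTop.1 <|
    eventually_lt_of_lt_liminf (b := c) (by grind) hbot
  obtain ⟨T₂, hT₂⟩ := eventually_atBot.1 <|
    eventually_lt_of_limsup_lt (b := -c) (by grind) htop
  refine ⟨c, hc, max (max T₁ (-T₂)) 0, le_max_right _ _, fun u hu => ?_⟩
  rcases le_or_gt 0 u with hu0 | hu0
  · rw [abs_of_nonneg hu0] at hu ⊢
    nlinarith [hT₁ u (by grind)]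
  · rw [abs_of_neg hu0] at hu ⊢
    nlinarith [hT₂ u (by grind)]

lemma sub_le_mul_add_of_mul_abs_le {g : ℝ → ℝ} {c K M T : ℝ} (hc : 0 ≤ c) (hT : 0 ≤ T)
    (hK : ∀ u, |g u| ≤ K) (hgT : ∀ u, T ≤ |u| → c * |u| ≤ u * g u) (x : ℝ) {v : ℝ}
    (hv : |v| ≤ M) : c * |x| - (c + K) * (M + T) ≤ g (x + v) * x := by
  have hK0 : 0 ≤ K := (abs_nonneg _).trans (hK 0)
  have hgv : |g (x + v) * v| ≤ K * M := by
    rw [abs_mul]; exact mul_le_mul (hK _) hv (abs_nonneg _) hK0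
  have hx : |x| ≤ |x + v| + M := by
    have := abs_sub (x + v) v
    rw [add_sub_cancel_right] at this
    linarith
  rcases le_or_gt T |x + v| with hxv | hxv
  · -- g (x + v) * x = (x + v) * g (x + v) - g (x + v) * v
    nlinarith [hgT _ hxv, abs_le.1 hgv]
  · have hgx : |g (x + v) * x| ≤ K * (T + M) := by
      rw [abs_mul]; exact mul_le_mul (hK _) (by linarith) (abs_nonneg _) hK0
    nlinarith [abs_le.1 hgx]

lemma mul_sub_le_integral_mul_cos_add_mul_sin {g : ℝ → ℝ} (hg : Measurable g) {c K M T : ℝ}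
    (hc : 0 ≤ c) (hT : 0 ≤ T) (hK : ∀ u, |g u| ≤ K) (hgT : ∀ u, T ≤ |u| → c * |u| ≤ u * g u)
    {n : ℕ} (hn : n ≠ 0) (a b : ℝ) {U : ℝ → ℝ} (hU : Measurable U) (hUM : ∀ t, |U t| ≤ M) :
    c * π * √(a ^ 2 + b ^ 2) - 2 * π * ((c + K) * (M + T)) ≤
      ∫ t in (0:ℝ)..2 * π, g (a * cos (n * t) + b * sin (n * t) + U t)
        * (a * cos (n * t) + b * sin (n * t)) := by
  set φ := fun t : ℝ => a * cos (n * t) + b * sin (n * t)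
  have hφ : Continuous φ := by fun_prop
  have hK0 : 0 ≤ K := (abs_nonneg _).trans (hK 0)
  have hint :
      IntervalIntegrable (fun t => g (φ t + U t) * φ t) MeasureTheory.volume 0 (2 * π) := by
    refine (intervalIntegrable_const (c := K * √(a ^ 2 + b ^ 2))).mono_fun'
      ((hg.comp (hφ.measurable.add hU)).mul hφ.measurable).aestronglyMeasurable
      (MeasureTheory.ae_of_all _ fun t => ?_)
    dsimp only
    rw [norm_mul, norm_eq_abs, norm_eq_abs]
    exact mul_le_mul (hK _) (abs_mul_cos_add_mul_sin_le a b _) (abs_nonneg _) hK0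
  have hφabs : Continuous fun t => c * |φ t| := continuous_const.mul hφ.abs
  calc c * π * √(a ^ 2 + b ^ 2) - 2 * π * ((c + K) * (M + T))
      ≤ c * (∫ t in (0:ℝ)..2 * π, |φ t|) - 2 * π * ((c + K) * (M + T)) := by
        rw [mul_assoc]; gcongr; exact mul_sqrt_le_integral_abs_mul_cos_add_mul_sin hn a b
    _ = ∫ t in (0:ℝ)..2 * π, (c * |φ t| - (c + K) * (M + T)) := by
        rw [intervalIntegral.integral_sub (hφabs.intervalIntegrable _ _) intervalIntegrable_const,
          intervalIntegral.integral_const_mul, intervalIntegral.integral_const, smul_eq_mul,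
          sub_zero]
    _ ≤ ∫ t in (0:ℝ)..2 * π, g (φ t + U t) * φ t :=
        intervalIntegral.integral_mono_on (by positivity)
          ((hφabs.sub continuous_const).intervalIntegrable _ _) hint
          fun t _ => sub_le_mul_add_of_mul_abs_le hc hT hK hgT (φ t) (hUM t)

theorem stmt_13_general (g : ℝ → ℝ) (hgc : Continuous g) (Kb : ℝ) (hKb : ∀ u, |g u| ≤ Kb)
    (hinf : 0 < Filter.liminf g Filter.atTop)
    (hsup : Filter.limsup g Filter.atBot < 0)
    (n : ℕ) (hn : 1 ≤ n) (M : ℝ) :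
    ∃ μ > (0:ℝ), ∃ R > (0:ℝ), ∀ a b : ℝ, R^2 ≤ a^2 + b^2 →
      ∀ U : ℝ → ℝ, Measurable U → (∀ t, |U t| ≤ M) →
        μ * Real.sqrt (a^2 + b^2) ≤
          ∫ t in (0:ℝ)..(2*π),
            g (a * Real.cos (n*t) + b * Real.sin (n*t) + U t)
              * (a * Real.cos (n*t) + b * Real.sin (n*t)) := by
  obtain ⟨c, hc, T, hT, hgT⟩ := exists_pos_mul_abs_le_mul_of_liminf_pos_of_limsup_neg
    (isBoundedUnder_of ⟨-Kb, fun u => (abs_le.1 (hKb u)).1⟩)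
    (isBoundedUnder_of ⟨Kb, fun u => (abs_le.1 (hKb u)).2⟩) hinf hsup
  refine ⟨c * π / 2, by positivity, max 1 (4 * ((c + Kb) * (M + T)) / c), by positivity,
    fun a b hab U hU hUM => ?_⟩
  have hRA : 4 * ((c + Kb) * (M + T)) / c ≤ √(a ^ 2 + b ^ 2) :=
    (le_max_right _ _).trans (Real.le_sqrt_of_sq_le hab)
  rw [div_le_iff₀ hc] at hRA
  calc c * π / 2 * √(a ^ 2 + b ^ 2)
      ≤ c * π * √(a ^ 2 + b ^ 2) - 2 * π * ((c + Kb) * (M + T)) := by nlinarith [pi_pos]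
    _ ≤ _ := mul_sub_le_integral_mul_cos_add_mul_sin hgc.measurable hc.le hT hKb hgT (by omega)
        a b hU hUM

theorem stmt_13 (g : ℝ → ℝ) (hgc : Continuous g) (Kb : ℝ) (hKb : ∀ u, |g u| ≤ Kb)
    (hsign : ∀ u : ℝ, u ≠ 0 → 0 < u * g u)
    (hinf : 0 < Filter.liminf g Filter.atTop)
    (hsup : Filter.limsup g Filter.atBot < 0)
    (n : ℕ) (hn : 1 ≤ n) (M : ℝ) (hM : 0 < M) :
    ∃ μ > (0:ℝ), ∃ R > (0:ℝ), ∀ a b : ℝ, R^2 ≤ a^2 + b^2 →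
      ∀ U : ℝ → ℝ, Measurable U → (∀ t, |U t| ≤ M) →
        μ * Real.sqrt (a^2 + b^2) ≤
          ∫ t in (0:ℝ)..(2*π),
            g (a * Real.cos (n*t) + b * Real.sin (n*t) + U t)
              * (a * Real.cos (n*t) + b * Real.sin (n*t)) :=
  stmt_13_general g hgc Kb hKb hinf hsup n hn M
end

section
/- Let f : ℝ → ℝ be continuous and 2π-periodic, n ≥ 1 an integer. Then there exists a 2π-periodic C² solution of u'' + n²u = f(t) if and only if ∫_0^{2π} f(t) cos(nt) dt = 0 and ∫_0^{2π} f(t) sin(nt) dt = 0. -/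
/-!
Multiplying `u'' + k²u` by `cos (k t + φ)` gives the derivative of
`u' cos (k t + φ) + k u sin (k t + φ)`, which is periodic, so its integral over a period vanishes;
`φ = 0` and `φ = -π/2` give the two orthogonality conditions. Conversely, variation of constants
gives the solution `u t = k⁻¹ (sin (k t) C t - cos (k t) S t)`, where `C` and `S` are the
primitives of `f cos (k ·)` and `f sin (k ·)` vanishing at `0`; these primitives are periodic
exactly because their integrals over a period vanish, hence so is `u`.
-/

open Real Function MeasureTheory

theorem Function.Periodic.deriv {𝕜 F : Type*} [NontriviallyNormedField 𝕜] [NormedAddCommGroup F]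
    [NormedSpace 𝕜 F] {f : 𝕜 → F} {T : 𝕜} (hf : Periodic f T) :
    Periodic (deriv f) T := fun t => by
  rw [← deriv_comp_add_const, hf.funext]

theorem Function.Periodic.periodic_primitive_of_integral_eq_zero {E : Type*} [NormedAddCommGroup E]
    [NormedSpace ℝ E] {g : ℝ → E} {T : ℝ} (hg : Periodic g T)
    (hint : ∀ a b, IntervalIntegrable g volume a b) (h0 : ∫ x in 0..T, g x = 0) :
    Periodic (fun t => ∫ x in 0..t, g x) T := fun t => by
  simpa [h0] using hg.intervalIntegral_add_eq_add 0 t hint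

theorem intervalIntegral_eq_zero_of_hasDerivAt_of_periodic {E : Type*} [NormedAddCommGroup E]
    [NormedSpace ℝ E] [CompleteSpace E] {F g : ℝ → E} {T : ℝ} (hF : ∀ t, HasDerivAt F (g t) t)
    (hFp : Periodic F T) (hg : IntervalIntegrable g volume 0 T) :
    ∫ t in 0..T, g t = 0 := by
  rw [intervalIntegral.integral_eq_sub_of_hasDerivAt (fun t _ => hF t) hg, sub_eq_zero]
  simpa using hFp 0

theorem periodic_cos_int_mul_add (n : ℤ) (φ : ℝ) :
    Periodic (fun t => cos (n * t + φ)) (2 * π) := fun t => by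
  simp only [mul_add, add_right_comm, cos_add_int_mul_two_pi]

theorem periodic_sin_int_mul_add (n : ℤ) (φ : ℝ) :
    Periodic (fun t => sin (n * t + φ)) (2 * π) := fun t => by
  simp only [mul_add, add_right_comm, sin_add_int_mul_two_pi]

theorem contDiff_two_of_hasDerivAt {𝕜 F : Type*} [NontriviallyNormedField 𝕜] [NormedAddCommGroup F]
    [NormedSpace 𝕜 F] {u v w : 𝕜 → F} (hu : ∀ t, HasDerivAt u (v t) t)
    (hv : ∀ t, HasDerivAt v (w t) t) (hw : Continuous w) : ContDiff 𝕜 2 u := by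
  have hu' : deriv u = v := funext fun t => (hu t).deriv
  have hv' : deriv v = w := funext fun t => (hv t).deriv
  rw [show (2 : WithTop ℕ∞) = 1 + 1 from rfl, contDiff_succ_iff_deriv, hu', contDiff_one_iff_deriv,
    hv']
  exact ⟨fun t => (hu t).differentiableAt, by simp, fun t => (hv t).differentiableAt, hw⟩

section Oscillator

variable {k : ℝ}

theorem hasDerivAt_mul_cos_add_mul_sin {u v : ℝ → ℝ} {w φ t : ℝ} (hu : HasDerivAt u (v t) t)
    (hv : HasDerivAt v w t) :
    HasDerivAt (fun s => v s * cos (k * s + φ) + k * (u s * sin (k * s + φ)))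
      ((w + k ^ 2 * u t) * cos (k * t + φ)) t := by
  have hθ : HasDerivAt (fun s => k * s + φ) k t := by
    simpa using ((hasDerivAt_id t).const_mul k).add_const φ
  refine (((hv.mul hθ.cos).add ((hu.mul hθ.sin).const_mul k))).congr_deriv ?_
  ring

theorem integral_deriv_deriv_add_mul_cos_eq_zero_of_periodic {u : ℝ → ℝ} {φ T : ℝ}
    (hup : Periodic u T) (hu : ContDiff ℝ 2 u)
    (hcos : Periodic (fun t => cos (k * t + φ)) T)
    (hsin : Periodic (fun t => sin (k * t + φ)) T) :
    ∫ t in 0..T, (deriv (deriv u) t + k ^ 2 * u t) * cos (k * t + φ) = 0 := by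
  have hu' : Differentiable ℝ (deriv u) := hu.differentiable_deriv_two
  refine intervalIntegral_eq_zero_of_hasDerivAt_of_periodic
    (fun t => hasDerivAt_mul_cos_add_mul_sin (hu.differentiable two_ne_zero t).hasDerivAt
      (hu' t).hasDerivAt) ?_ ?_
  · exact (hup.deriv.mul hcos).add ((hup.mul hsin).smul k)
  · have := (hu.deriv' (n := 1)).continuous_deriv_one
    exact (by fun_prop : Continuous _).intervalIntegrable _ _

theorem hasDerivAt_sin_mul_sub_cos_mul {C S : ℝ → ℝ} {c t : ℝ}
    (hC : HasDerivAt C (c * cos (k * t)) t) (hS : HasDerivAt S (c * sin (k * t)) t) :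
    HasDerivAt (fun s => sin (k * s) * C s - cos (k * s) * S s)
      (k * (cos (k * t) * C t + sin (k * t) * S t)) t := by
  have hθ : HasDerivAt (fun s => k * s) k t := by simpa using (hasDerivAt_id t).const_mul k
  refine ((hθ.sin.mul hC).sub (hθ.cos.mul hS)).congr_deriv ?_
  ring

theorem hasDerivAt_cos_mul_add_sin_mul {C S : ℝ → ℝ} {c t : ℝ}
    (hC : HasDerivAt C (c * cos (k * t)) t) (hS : HasDerivAt S (c * sin (k * t)) t) :
    HasDerivAt (fun s => cos (k * s) * C s + sin (k * s) * S s)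
      (c - k * (sin (k * t) * C t - cos (k * t) * S t)) t := by
  have hθ : HasDerivAt (fun s => k * s) k t := by simpa using (hasDerivAt_id t).const_mul k
  refine ((hθ.cos.mul hC).add (hθ.sin.mul hS)).congr_deriv ?_
  linear_combination c * sin_sq_add_cos_sq (k * t)

theorem exists_periodic_solution_of_integrals_mul_cos_sin_eq_zero {f : ℝ → ℝ} {T : ℝ} (hk : k ≠ 0)
    (hf : Continuous f) (hfp : Periodic f T)
    (hcos : Periodic (fun t => cos (k * t)) T)
    (hsin : Periodic (fun t => sin (k * t)) T)
    (hc : ∫ t in 0..T, f t * cos (k * t) = 0) (hs : ∫ t in 0..T, f t * sin (k * t) = 0) :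
    ∃ u : ℝ → ℝ, ContDiff ℝ 2 u ∧ Periodic u T ∧
      ∀ t, deriv (deriv u) t + k ^ 2 * u t = f t := by
  have hfc : Continuous fun t => f t * cos (k * t) := by fun_prop
  have hfs : Continuous fun t => f t * sin (k * t) := by fun_prop
  set C := fun t => ∫ s in 0..t, f s * cos (k * s)
  set S := fun t => ∫ s in 0..t, f s * sin (k * s)
  have hC t : HasDerivAt C (f t * cos (k * t)) t := (hfc.integral_hasStrictDerivAt 0 t).hasDerivAt
  have hS t : HasDerivAt S (f t * sin (k * t)) t := (hfs.integral_hasStrictDerivAt 0 t).hasDerivAt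
  have hCp : Periodic C T :=
    (hfp.mul hcos).periodic_primitive_of_integral_eq_zero (fun _ _ => hfc.intervalIntegrable _ _) hc
  have hSp : Periodic S T :=
    (hfp.mul hsin).periodic_primitive_of_integral_eq_zero (fun _ _ => hfs.intervalIntegrable _ _) hs
  -- `u t = k⁻¹ ∫₀ᵗ sin (k (t - s)) f s ds`, the variation-of-constants solution
  set u := fun t => k⁻¹ * (sin (k * t) * C t - cos (k * t) * S t)
  set v := fun t => cos (k * t) * C t + sin (k * t) * S t
  have hu t : HasDerivAt u (v t) t :=
    ((hasDerivAt_sin_mul_sub_cos_mul (hC t) (hS t)).const_mul k⁻¹).congr_deriv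
      (by simp only [v]; field_simp)
  have hv t : HasDerivAt v (f t - k ^ 2 * u t) t :=
    (hasDerivAt_cos_mul_add_sin_mul (hC t) (hS t)).congr_deriv (by simp only [u]; field_simp)
  have hu_cont : Continuous u := continuous_iff_continuousAt.2 fun t => (hu t).continuousAt
  refine ⟨u, contDiff_two_of_hasDerivAt hu hv (by fun_prop), ?_, fun t => ?_⟩
  · exact ((hsin.mul hCp).sub (hcos.mul hSp)).smul k⁻¹
  · rw [funext fun t => (hu t).deriv, (hv t).deriv]
    ring

end Oscillator

theorem stmt_19 (n : ℕ) (hn : 1 ≤ n) (f : ℝ → ℝ)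
    (hfc : Continuous f) (hfp : Function.Periodic f (2*π)) :
    (∃ u : ℝ → ℝ, ContDiff ℝ 2 u ∧ Function.Periodic u (2*π) ∧
      ∀ t : ℝ, deriv (deriv u) t + (n:ℝ)^2 * u t = f t) ↔
    ((∫ t in (0:ℝ)..(2*π), f t * Real.cos (n*t)) = 0 ∧
     (∫ t in (0:ℝ)..(2*π), f t * Real.sin (n*t)) = 0) := by
  have hcos φ := periodic_cos_int_mul_add n φ
  have hsin φ := periodic_sin_int_mul_add n φ
  push_cast at hcos hsin
  constructor
  · rintro ⟨u, hu, hup, hode⟩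
    have h₀ := integral_deriv_deriv_add_mul_cos_eq_zero_of_periodic hup hu (hcos 0) (hsin 0)
    have h₁ := integral_deriv_deriv_add_mul_cos_eq_zero_of_periodic hup hu (hcos (-(π / 2)))
      (hsin (-(π / 2)))
    simp only [hode, add_zero, ← sub_eq_add_neg, cos_sub_pi_div_two] at h₀ h₁
    exact ⟨h₀, h₁⟩
  · rintro ⟨hc, hs⟩
    have hn' : (n : ℝ) ≠ 0 := by positivity
    exact exists_periodic_solution_of_integrals_mul_cos_sin_eq_zero hn' hfc hfp
      (by simpa using hcos 0) (by simpa using hsin 0) hc hs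
end
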